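/- One complete iteration of the modified K-plane regression algorithm does not increase the error function: if Θ^{c+1} is obtained from Θ^c by (i) forming sets S_k^c via argmin assignment with parameters Θ^c, (ii) setting w̃_k^{c+1} to the least-squares minimizer over S_k^c and μ_k^{c+1} to the centroid of {x_n : n ∈ S_k^c}, then E(Θ^{c+1}) ≤ E(Θ^c), where E(Θ) = Σ_{n=1}^N min_{k∈{1,...,K}} [(w̃_kᵀx̃_n − y_n)² + γ||x_n − μ_k||²]. -/

import Mathlib

/-!
Each point's new error is at most its new cost in the cluster it was assigned to under `Θᶜ`,
so `E(Θᶜ⁺¹)` is bounded by the sum over clusters of the within-cluster costs with the new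
parameters. On a cluster the cost is a least-squares residual, minimised by the solution of the
normal equations, plus `γ` times a sum of squared deviations, minimised by the centroid; hence
each cluster's cost does not increase, and with the old parameters the within-cluster costs sum
to `E(Θᶜ)` because every point sits in a cluster of minimal cost.
-/

open Matrix Finset

section LeastArgmin

variable {κ β : Type*} [LinearOrder κ] [LinearOrder β]

def IsLeastArgmin (f : κ → β) (k : κ) : Prop :=
  (∀ j, f k ≤ f j) ∧ ∀ j, j < k → f k < f j

theorem IsLeastArgmin.unique {f : κ → β} {k k' : κ} (hk : IsLeastArgmin f k)
    (hk' : IsLeastArgmin f k') : k = k' := by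
  rcases lt_trichotomy k k' with h | h | h
  · exact absurd (hk.1 k') (not_le.2 (hk'.2 k h))
  · exact h
  · exact absurd (hk'.1 k) (not_le.2 (hk.2 k' h))

theorem existsUnique_isLeastArgmin [Fintype κ] [Nonempty κ] (f : κ → β) :
    ∃! k, IsLeastArgmin f k := by
  -- the lexicographic minimiser of `(f k, k)` is the least minimiser of `f`
  obtain ⟨k, -, hk⟩ := exists_min_image univ (fun k => toLex (f k, k)) univ_nonempty
  have hlex (j : κ) := Prod.Lex.toLex_le_toLex'.1 (hk j (mem_univ _))
  have hP : IsLeastArgmin f k :=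
    ⟨fun j => (hlex j).1, fun j hjk => lt_of_le_of_ne (hlex j).1 fun hkj =>
      (hjk.trans_le ((hlex j).2 hkj)).false⟩
  exact ⟨k, hP, fun _ hk' => hk'.unique hP⟩

end LeastArgmin

theorem Finset.sum_fiberwise_apply {ι κ M : Type*} [Fintype κ] [DecidableEq κ] [AddCommMonoid M]
    (s : Finset ι) (σ : ι → κ) (f : κ → ι → M) :
    ∑ k, ∑ n ∈ s with σ n = k, f k n = ∑ n ∈ s, f (σ n) n := by
  rw [← sum_fiberwise s σ fun n => f (σ n) n]
  exact sum_congr rfl fun k _ => sum_congr rfl fun n hn => by rw [(mem_filter.1 hn).2]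

theorem Finset.sum_sq_sub_mean_le {ι : Type*} (S : Finset ι) (a : ι → ℝ) (m : ℝ) :
    ∑ n ∈ S, (a n - (∑ n ∈ S, a n) / #S) ^ 2 ≤ ∑ n ∈ S, (a n - m) ^ 2 := by
  rcases S.eq_empty_or_nonempty with rfl | hS
  · simp
  set μ := (∑ n ∈ S, a n) / #S
  have hsum : ∑ n ∈ S, a n = #S * μ := by
    have : (#S : ℝ) ≠ 0 := by exact_mod_cast hS.card_pos.ne'
    exact (mul_div_cancel₀ _ this).symm
  have hgap : ∑ n ∈ S, (a n - m) ^ 2 - ∑ n ∈ S, (a n - μ) ^ 2 = #S * (μ - m) ^ 2 := by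
    rw [← sum_sub_distrib]
    simp_rw [show ∀ n, (a n - m) ^ 2 - (a n - μ) ^ 2 = (μ - m) * (2 * a n - (m + μ)) from
      fun n => by ring]
    rw [← mul_sum, sum_sub_distrib, ← mul_sum, hsum, sum_const, nsmul_eq_mul]
    ring
  nlinarith [sq_nonneg (μ - m), hS.card_pos]

section LeastSquares

variable {ι m : Type*} [Fintype m] (S : Finset ι) (X : ι → m → ℝ)

theorem Matrix.sum_vecMulVec_self_mulVec (w : m → ℝ) :
    (∑ n ∈ S, vecMulVec (X n) (X n)) *ᵥ w = ∑ n ∈ S, (X n ⬝ᵥ w) • X n := by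
  simp only [sum_mulVec, vecMulVec_mulVec, op_smul_eq_smul]

theorem sum_sq_le_sum_sq_add_dotProduct {r : ι → ℝ} (hr : ∑ n ∈ S, r n • X n = 0)
    (v : m → ℝ) : ∑ n ∈ S, r n ^ 2 ≤ ∑ n ∈ S, (r n + v ⬝ᵥ X n) ^ 2 := by
  have hcross : ∑ n ∈ S, r n * v ⬝ᵥ X n = 0 := by
    simpa [dotProduct_sum, dotProduct_smul, mul_comm] using congrArg (v ⬝ᵥ ·) hr
  have hsq : ∑ n ∈ S, (r n + v ⬝ᵥ X n) ^ 2
      = ∑ n ∈ S, r n ^ 2 + 2 * ∑ n ∈ S, r n * v ⬝ᵥ X n + ∑ n ∈ S, (v ⬝ᵥ X n) ^ 2 := by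
    simp only [add_sq, sum_add_distrib, mul_sum, mul_assoc]
  rw [hsq, hcross]
  linarith [sum_nonneg fun n (_ : n ∈ S) => sq_nonneg (v ⬝ᵥ X n)]

variable [DecidableEq m]

theorem sum_sq_leastSquares_le (y : ι → ℝ) (hA : IsUnit (∑ n ∈ S, vecMulVec (X n) (X n)))
    (w : m → ℝ) :
    ∑ n ∈ S, (((∑ n ∈ S, vecMulVec (X n) (X n))⁻¹ *ᵥ ∑ n ∈ S, y n • X n) ⬝ᵥ X n - y n) ^ 2
      ≤ ∑ n ∈ S, (w ⬝ᵥ X n - y n) ^ 2 := by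
  set A := ∑ n ∈ S, vecMulVec (X n) (X n)
  set ws := A⁻¹ *ᵥ ∑ n ∈ S, y n • X n
  have hnormal : ∑ n ∈ S, (ws ⬝ᵥ X n - y n) • X n = 0 := by
    have hAws : A *ᵥ ws = ∑ n ∈ S, y n • X n := by
      rw [mulVec_mulVec, mul_nonsing_inv _ ((isUnit_iff_isUnit_det A).1 hA), one_mulVec]
    rw [sum_vecMulVec_self_mulVec] at hAws
    simp only [sub_smul, sum_sub_distrib, dotProduct_comm ws, hAws, sub_self]
  convert sum_sq_le_sum_sq_add_dotProduct S X hnormal (w - ws) using 3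
  rw [sub_dotProduct]
  ring

end LeastSquares

theorem sum_kplaneCost_update_le {ι m α : Type*} [Fintype m] [DecidableEq m] [Fintype α]
    (S : Finset ι) (X : ι → m → ℝ) (x : ι → α → ℝ) (y : ι → ℝ) {γ : ℝ} (hγ : 0 ≤ γ)
    (hA : IsUnit (∑ n ∈ S, vecMulVec (X n) (X n))) (w : m → ℝ) (μ : α → ℝ) :
    ∑ n ∈ S, ((((∑ n ∈ S, vecMulVec (X n) (X n))⁻¹ *ᵥ ∑ n ∈ S, y n • X n) ⬝ᵥ X n - y n) ^ 2
        + γ * ∑ i, (x n i - (∑ n ∈ S, x n i) / #S) ^ 2)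
      ≤ ∑ n ∈ S, ((w ⬝ᵥ X n - y n) ^ 2 + γ * ∑ i, (x n i - μ i) ^ 2) := by
  rw [sum_add_distrib, sum_add_distrib, ← mul_sum, ← mul_sum, sum_comm, sum_comm (s := S)]
  gcongr ?_ + γ * ?_
  · exact sum_sq_leastSquares_le S X y hA w
  · exact sum_le_sum fun i _ => sum_sq_sub_mean_le S (x · i) (μ i)

theorem modified_kplane_monotone_decrease_general (d N K : ℕ) (hK : 0 < K)
    (γ : ℝ) (hγ : 0 < γ)
    (x : Fin N → (Fin d → ℝ)) (y : Fin N → ℝ)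
    (xt : Fin N → (Fin (d + 1) → ℝ))
    (wc : Fin K → (Fin (d + 1) → ℝ)) (μc : Fin K → (Fin d → ℝ))
    (costc : Fin K → Fin N → ℝ)
    (hcostc : ∀ k n, costc k n =
      ((∑ i, wc k i * xt n i) - y n) ^ 2 + γ * ∑ i, (x n i - μc k i) ^ 2)
    -- (i) argmin assignment with parameters Θᶜ, ties broken by least index
    (Sc : Fin K → Finset (Fin N))
    (hSc : ∀ k, Sc k = Finset.univ.filter
      (fun n => (∀ j, costc k n ≤ costc j n) ∧ ∀ j, j < k → costc k n < costc j n))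
    -- (ii) least-squares and centroid updates
    (A : Fin K → Matrix (Fin (d + 1)) (Fin (d + 1)) ℝ)
    (hA : ∀ k, A k = ∑ n ∈ Sc k, Matrix.of (fun i j => xt n i * xt n j))
    (hInv : ∀ k, IsUnit (A k))
    (wc1 : Fin K → (Fin (d + 1) → ℝ)) (μc1 : Fin K → (Fin d → ℝ))
    (hw : ∀ k, wc1 k = (A k)⁻¹ *ᵥ (∑ n ∈ Sc k, y n • xt n))
    (hμ : ∀ k i, μc1 k i = (∑ n ∈ Sc k, x n i) / (Sc k).card) :
    ∑ n : Fin N, Finset.univ.inf' ⟨⟨0, hK⟩, Finset.mem_univ _⟩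
        (fun k => ((∑ i, wc1 k i * xt n i) - y n) ^ 2
          + γ * ∑ i, (x n i - μc1 k i) ^ 2)
      ≤ ∑ n : Fin N, Finset.univ.inf' ⟨⟨0, hK⟩, Finset.mem_univ _⟩
        (fun k => costc k n) := by
  classical
  have : Nonempty (Fin K) := ⟨⟨0, hK⟩⟩
  choose σ hσ hσ_unique using fun n => existsUnique_isLeastArgmin fun k => costc k n
  have hS : ∀ k, Sc k = univ.filter (σ · = k) := fun k => by
    rw [hSc k]
    ext n
    simp only [mem_filter, mem_univ, true_and]
    exact ⟨fun h => (hσ_unique n k h).symm, fun h => h ▸ hσ n⟩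
  have hcluster : ∀ k, ∑ n ∈ Sc k, (((∑ i, wc1 k i * xt n i) - y n) ^ 2
      + γ * ∑ i, (x n i - μc1 k i) ^ 2) ≤ ∑ n ∈ Sc k, costc k n := fun k => by
    simp only [hcostc, hw k, hμ k, hA k]
    exact sum_kplaneCost_update_le (Sc k) xt x y hγ.le (hA k ▸ hInv k) (wc k) (μc k)
  calc _ ≤ ∑ n, (((∑ i, wc1 (σ n) i * xt n i) - y n) ^ 2
          + γ * ∑ i, (x n i - μc1 (σ n) i) ^ 2) :=
        sum_le_sum fun n _ => by exact inf'_le _ (mem_univ _)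
    _ = ∑ k, ∑ n ∈ Sc k, (((∑ i, wc1 k i * xt n i) - y n) ^ 2
          + γ * ∑ i, (x n i - μc1 k i) ^ 2) := by
        simp_rw [hS, sum_fiberwise_apply]
    _ ≤ ∑ k, ∑ n ∈ Sc k, costc k n := sum_le_sum fun k _ => hcluster k
    _ = _ := by
        simp_rw [hS, sum_fiberwise_apply]
        exact sum_congr rfl fun n _ =>
          le_antisymm (le_inf' _ _ fun k _ => (hσ n).1 k) (inf'_le _ (mem_univ _))

/-- Theorem 1: one complete iteration of modified K-plane regression does not
increase the error function `E(Θ) = ∑ₙ min_k [(w̃ₖᵀx̃ₙ - yₙ)² + γ‖xₙ - μₖ‖²]`. -/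
theorem modified_kplane_monotone_decrease (d N K : ℕ) (hK : 0 < K)
    (γ : ℝ) (hγ : 0 < γ)
    (x : Fin N → (Fin d → ℝ)) (y : Fin N → ℝ)
    (xt : Fin N → (Fin (d + 1) → ℝ))
    (hxt : ∀ n, xt n = Fin.snoc (x n) 1)
    (wc : Fin K → (Fin (d + 1) → ℝ)) (μc : Fin K → (Fin d → ℝ))
    (costc : Fin K → Fin N → ℝ)
    (hcostc : ∀ k n, costc k n =
      ((∑ i, wc k i * xt n i) - y n) ^ 2 + γ * ∑ i, (x n i - μc k i) ^ 2)
    -- (i) argmin assignment with parameters Θᶜ, ties broken by least index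
    (Sc : Fin K → Finset (Fin N))
    (hSc : ∀ k, Sc k = Finset.univ.filter
      (fun n => (∀ j, costc k n ≤ costc j n) ∧ ∀ j, j < k → costc k n < costc j n))
    (hne : ∀ k, (Sc k).Nonempty)
    -- (ii) least-squares and centroid updates
    (A : Fin K → Matrix (Fin (d + 1)) (Fin (d + 1)) ℝ)
    (hA : ∀ k, A k = ∑ n ∈ Sc k, Matrix.of (fun i j => xt n i * xt n j))
    (hInv : ∀ k, IsUnit (A k))
    (wc1 : Fin K → (Fin (d + 1) → ℝ)) (μc1 : Fin K → (Fin d → ℝ))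
    (hw : ∀ k, wc1 k = (A k)⁻¹ *ᵥ (∑ n ∈ Sc k, y n • xt n))
    (hμ : ∀ k i, μc1 k i = (∑ n ∈ Sc k, x n i) / (Sc k).card) :
    ∑ n : Fin N, Finset.univ.inf' ⟨⟨0, hK⟩, Finset.mem_univ _⟩
        (fun k => ((∑ i, wc1 k i * xt n i) - y n) ^ 2
          + γ * ∑ i, (x n i - μc1 k i) ^ 2)
      ≤ ∑ n : Fin N, Finset.univ.inf' ⟨⟨0, hK⟩, Finset.mem_univ _⟩
        (fun k => costc k n) :=
  modified_kplane_monotone_decrease_general d N K hK γ hγ x y xt wc μc costc hcostc Sc hSc A hA hInv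
    wc1 μc1 hw hμ
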